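/- arXiv:1312.0516 — 2 statements merged into one kernel-verified Lean document; each statement's English description precedes it below -/
import Mathlib

section
/- Let A be a real N×N matrix, α > 0, and let f(X) = (1/2)‖X − A‖_F² − α·log det(X) on symmetric positive definite matrices X. If (A + Aᵀ)/2 = U·diag(λ₁,…,λ_N)·Uᵀ is an eigendecomposition, then X₀ = U·diag(μ₁,…,μ_N)·Uᵀ with μ_k = (λ_k + √(λ_k² + 4α))/2 minimizes f over all symmetric positive definite matrices. -/
/-!
The point `X₀` is the stationary point of the convex objective: with `B = (A + Aᵀ)/2`, the
identity `μ_k (μ_k - λ_k) = α` says `X₀ - B = α X₀⁻¹`. For `X = X₀ + Y` the Frobenius term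
expands to `‖Y‖² / 2 + α tr (X₀⁻¹ Y)` plus its value at `X₀` (the skew part of `A` is orthogonal
to the symmetric `Y`), and the tangent inequality `log det X ≤ log det X₀ + tr (X₀⁻¹ Y)` of the
concave `log det` absorbs the logarithmic term. That inequality is `log t ≤ t - 1` applied to the
eigenvalues of `X₀^{-1/2} X X₀^{-1/2}`.
-/

open Matrix Real

/-- Squared Frobenius norm of a real square matrix. -/
noncomputable def frobSq {N : ℕ} (X : Matrix (Fin N) (Fin N) ℝ) : ℝ :=
  Matrix.trace (Xᵀ * X)

lemma half_add_sqrt_sq_add_pos (l : ℝ) {α : ℝ} (hα : 0 < α) :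
    0 < (l + √(l ^ 2 + 4 * α)) / 2 := by
  have : |l| < √(l ^ 2 + 4 * α) := by
    rw [← sqrt_sq_eq_abs]
    exact sqrt_lt_sqrt (sq_nonneg l) (by linarith)
  linarith [neg_abs_le l]

lemma half_add_sqrt_sq_add_mul_sub (l : ℝ) {α : ℝ} (hα : 0 ≤ α) :
    (l + √(l ^ 2 + 4 * α)) / 2 * ((l + √(l ^ 2 + 4 * α)) / 2 - l) = α := by
  have := sq_sqrt (show 0 ≤ l ^ 2 + 4 * α by positivity)
  linear_combination this / 4

lemma mul_mul_mul_mul_of_mul_eq_one {M : Type*} [Monoid M] {u v : M} (h : v * u = 1) (a b : M) :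
    u * a * v * (u * b * v) = u * (a * b) * v := by
  simp only [mul_assoc]
  rw [← mul_assoc v, h, one_mul]

namespace Matrix

variable {n : Type*} [Fintype n]

lemma IsSymm.trace_mul_transpose {R : Type*} [CommSemiring R] {Y : Matrix n n R} (hY : Y.IsSymm)
    (A : Matrix n n R) : trace (Y * Aᵀ) = trace (Y * A) := by
  rw [← trace_transpose, transpose_mul, transpose_transpose, hY.eq, trace_mul_comm]

namespace PosDef

variable [DecidableEq n]

lemma log_det_le_trace_sub_card {H : Matrix n n ℝ} (hH : H.PosDef) :
    log H.det ≤ H.trace - Fintype.card n := by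
  have hpos := hH.eigenvalues_pos
  rw [hH.isHermitian.det_eq_prod_eigenvalues, hH.isHermitian.trace_eq_sum_eigenvalues]
  simp only [RCLike.ofReal_real_eq_id, id_eq]
  rw [log_prod fun i _ => (hpos i).ne']
  calc ∑ i, log (hH.isHermitian.eigenvalues i)
      ≤ ∑ i, (hH.isHermitian.eigenvalues i - 1) :=
        Finset.sum_le_sum fun i _ => log_le_sub_one_of_pos (hpos i)
    _ = _ := by simp [Finset.sum_sub_distrib]

open scoped MatrixOrder in
lemma log_det_mul_le_trace_sub_card {P X : Matrix n n ℝ} (hP : P.PosDef) (hX : X.PosDef) :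
    log (P * X).det ≤ (P * X).trace - Fintype.card n := by
  set S := CFC.sqrt P
  have hSS : S * S = P := CFC.sqrt_mul_sqrt_self P hP.posSemidef.nonneg
  have hSXS : (S * X * S).PosDef :=
    ((CFC.isStrictlyPositive_conjSqrt_iff P X hP.isStrictlyPositive).mpr
      hX.isStrictlyPositive).posDef
  have hdet : (S * X * S).det = (P * X).det := by
    rw [← hSS, det_mul, det_mul, det_mul, det_mul]; ring
  have htr : (S * X * S).trace = (P * X).trace := by rw [trace_mul_cycle, hSS]
  simpa only [hdet, htr] using hSXS.log_det_le_trace_sub_card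

lemma log_det_le_log_det_add_trace {P X : Matrix n n ℝ} (hP : P.PosDef) (hX : X.PosDef) :
    log X.det ≤ log P.det + trace (P⁻¹ * (X - P)) := by
  have h := hP.inv.log_det_mul_le_trace_sub_card hX
  rw [det_mul, det_nonsing_inv, Ring.inverse_eq_inv', log_mul (inv_ne_zero hP.det_pos.ne')
    hX.det_pos.ne', log_inv] at h
  rw [Matrix.mul_sub, trace_sub, nonsing_inv_mul P hP.det_pos.ne'.isUnit, trace_one]
  linarith

end PosDef

end Matrix

lemma frobSq_nonneg {N : ℕ} (X : Matrix (Fin N) (Fin N) ℝ) : 0 ≤ frobSq X := by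
  simpa [frobSq] using (posSemidef_conjTranspose_mul_self X).trace_nonneg

lemma frobSq_add {N : ℕ} (P Q : Matrix (Fin N) (Fin N) ℝ) :
    frobSq (P + Q) = frobSq P + 2 * trace (Pᵀ * Q) + frobSq Q := by
  have hQP : trace (Qᵀ * P) = trace (Pᵀ * Q) := by
    rw [← trace_transpose, transpose_mul, transpose_transpose]
  simp only [frobSq, transpose_add, Matrix.add_mul, Matrix.mul_add, trace_add, hQP]
  ring

lemma objective_le_of_sub_eq_smul_inv {N : ℕ} {A X₀ : Matrix (Fin N) (Fin N) ℝ} {α : ℝ}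
    (hα : 0 ≤ α) (hX₀ : X₀.PosDef) (hstat : X₀ - (1 / 2 : ℝ) • (A + Aᵀ) = α • X₀⁻¹)
    {X : Matrix (Fin N) (Fin N) ℝ} (hX : X.PosDef) :
    (1 / 2) * frobSq (X₀ - A) - α * log X₀.det ≤ (1 / 2) * frobSq (X - A) - α * log X.det := by
  set Y := X - X₀
  have hY : Y.IsSymm := isHermitian_iff_isSymm.mp (hX.isHermitian.sub hX₀.isHermitian)
  have hsymm : trace (Y * ((1 / 2 : ℝ) • (A + Aᵀ))) = trace (Y * A) := by
    rw [Matrix.mul_smul, Matrix.mul_add, trace_smul, trace_add, hY.trace_mul_transpose,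
      smul_eq_mul]
    ring
  have hcross : trace (Yᵀ * (X₀ - A)) = α * trace (X₀⁻¹ * Y) := by
    calc trace (Yᵀ * (X₀ - A)) = trace (Y * (X₀ - (1 / 2 : ℝ) • (A + Aᵀ))) := by
          rw [hY.eq, Matrix.mul_sub, Matrix.mul_sub, trace_sub, trace_sub, hsymm]
      _ = α * trace (X₀⁻¹ * Y) := by
          rw [hstat, Matrix.mul_smul, trace_smul, trace_mul_comm, smul_eq_mul]
  have hexpand : frobSq (X - A) = frobSq Y + 2 * trace (Yᵀ * (X₀ - A)) + frobSq (X₀ - A) := by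
    rw [← frobSq_add, sub_add_sub_cancel]
  have hlog := hX₀.log_det_le_log_det_add_trace hX
  rw [hexpand, hcross]
  nlinarith [frobSq_nonneg Y, mul_le_mul_of_nonneg_left hlog hα]

theorem stmt0 {N : ℕ} (A U : Matrix (Fin N) (Fin N) ℝ) (α : ℝ) (hα : 0 < α)
    (lam : Fin N → ℝ)
    (hU : U * Uᵀ = 1 ∧ Uᵀ * U = 1)
    (hA : (1/2 : ℝ) • (A + Aᵀ) = U * Matrix.diagonal lam * Uᵀ)
    (X₀ : Matrix (Fin N) (Fin N) ℝ)
    (hX₀ : X₀ = U * Matrix.diagonal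
      (fun k => (lam k + Real.sqrt ((lam k)^2 + 4*α)) / 2) * Uᵀ) :
    X₀.PosDef ∧ ∀ X : Matrix (Fin N) (Fin N) ℝ, X.PosDef →
      (1/2) * frobSq (X₀ - A) - α * Real.log X₀.det ≤
      (1/2) * frobSq (X - A) - α * Real.log X.det := by
  have hUunit : IsUnit U := ⟨⟨U, Uᵀ, hU.1, hU.2⟩, rfl⟩
  have hX₀pos : X₀.PosDef := by
    simpa [hX₀] using (posDef_diagonal_iff.mpr fun k => half_add_sqrt_sq_add_pos (lam k) hα)
      |>.mul_mul_conjTranspose_same (vecMul_injective_iff_isUnit.mpr hUunit)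
  have hprod : X₀ * (X₀ - (1 / 2 : ℝ) • (A + Aᵀ)) = α • 1 := by
    rw [hA, hX₀, ← Matrix.sub_mul, ← Matrix.mul_sub, diagonal_sub,
      mul_mul_mul_mul_of_mul_eq_one hU.2, diagonal_mul_diagonal]
    simp only [half_add_sqrt_sq_add_mul_sub _ hα.le]
    rw [← smul_one_eq_diagonal, Matrix.mul_smul, Matrix.smul_mul, Matrix.mul_one, hU.1]
  have hstat : X₀ - (1 / 2 : ℝ) • (A + Aᵀ) = α • X₀⁻¹ := by
    rw [← nonsing_inv_mul_cancel_left X₀ (X₀ - _) hX₀pos.det_pos.ne'.isUnit, hprod,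
      Matrix.mul_smul, Matrix.mul_one]
  exact ⟨hX₀pos, fun X hX => objective_le_of_sub_eq_smul_inv hα.le hX₀pos hstat hX⟩
end

section
/- Let Y ∈ ℝ^{m×n} have singular value decomposition Y = U·diag(σ₁,…,σ_r)·Vᵀ, and let τ > 0. Then the matrix P_τ(Y) = U·diag(max(σ_i − τ, 0))·Vᵀ is the unique minimizer over X ∈ ℝ^{m×n} of (1/2)‖X − Y‖_F² + τ‖X‖_*, where ‖X‖_* is the nuclear norm (sum of singular values of X). -/
open Matrix

/-- Nuclear norm of a real matrix: sum of its singular values, i.e. the sum of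
the square roots of the eigenvalues of XᴴX. -/
noncomputable def nuclearNorm {m n : ℕ} (X : Matrix (Fin m) (Fin n) ℝ) : ℝ :=
  ∑ i, Real.sqrt ((Matrix.isHermitian_conjTranspose_mul_self X).eigenvalues i)

/-!
Let `G = Y - P = U diag(min σᵢ τ) Vᴴ`. Its spectral norm is at most `τ`, so trace duality
between the spectral and the nuclear norm gives `tr (Gᴴ X) ≤ τ ‖X‖_*` for every `X`, while
`tr (Gᴴ P) = τ ∑ (σᵢ - τ)⁺ ≥ τ ‖P‖_*`. Thus `G` is a subgradient of `τ ‖·‖_*` at `P`, and expanding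
`‖X - Y‖_F² = ‖X - P‖_F² - 2 tr (Gᴴ (X - P)) + ‖P - Y‖_F²` shows that the objective at `X` exceeds
the one at `P` by at least `½ ‖X - P‖_F²`.

Both duality facts come from the polar decomposition: in an eigenbasis of `XᴴX` the columns of
`X` are orthogonal with lengths `√λⱼ`, and normalising them gives a partial isometry `W` with
`tr (Wᴴ X) = ‖X‖_*`.
-/

open scoped Matrix.Norms.L2Operator

section
variable {m n r : Type*} [Fintype m] [Fintype n] [Fintype r]

omit [Fintype n] in
lemma conjTranspose_mul_diag_le_sqrt_mul_sqrt (A B : Matrix m n ℝ) (j : n) :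
    (Aᴴ * B) j j ≤ √((Aᴴ * A) j j) * √((Bᴴ * B) j j) := by
  simpa [mul_apply, sq] using Real.sum_mul_le_sqrt_mul_sqrt Finset.univ (A · j) (B · j)

lemma conjTranspose_mul_self_diag_le_l2_opNorm_sq [DecidableEq n] (A : Matrix m n ℝ) (j : n) :
    (Aᴴ * A) j j ≤ ‖A‖ ^ 2 := by
  have h := A.l2_opNorm_mulVec (EuclideanSpace.single j 1)
  simp only [PiLp.norm_single, norm_one, mul_one] at h
  have h2 := pow_le_pow_left₀ (norm_nonneg _) h 2
  rw [EuclideanSpace.norm_sq_eq] at h2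
  simpa [mul_apply, sq] using h2

lemma conjTranspose_mul_diag_le_l2_opNorm_mul_sqrt [DecidableEq n] (A B : Matrix m n ℝ)
    (j : n) : (Aᴴ * B) j j ≤ ‖A‖ * √((Bᴴ * B) j j) := by
  refine (conjTranspose_mul_diag_le_sqrt_mul_sqrt A B j).trans ?_
  gcongr
  exact (Real.sqrt_le_left (norm_nonneg A)).2 (conjTranspose_mul_self_diag_le_l2_opNorm_sq A j)

lemma l2_opNorm_le_one_of_conjTranspose_mul_self_eq_one [DecidableEq n] {U : Matrix m n ℝ}
    (hU : Uᴴ * U = 1) : ‖U‖ ≤ 1 := by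
  have h : ‖U‖ * ‖U‖ ≤ 1 := by
    rw [← l2_opNorm_conjTranspose_mul_self, hU, ← diagonal_one, l2_opNorm_diagonal]
    exact (pi_norm_le_iff_of_nonneg zero_le_one).2 fun _ => by simp
  nlinarith [norm_nonneg U]

lemma l2_opNorm_mul_diagonal_mul_conjTranspose_le [DecidableEq m] [DecidableEq n] [DecidableEq r]
    {U : Matrix m r ℝ} {V : Matrix n r ℝ} (hU : Uᴴ * U = 1) (hV : Vᴴ * V = 1) (g : r → ℝ) :
    ‖U * diagonal g * Vᴴ‖ ≤ ‖g‖ :=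
  calc ‖U * diagonal g * Vᴴ‖ ≤ ‖U‖ * ‖diagonal g‖ * ‖Vᴴ‖ :=
        (l2_opNorm_mul _ _).trans (by gcongr; exact l2_opNorm_mul _ _)
    _ ≤ 1 * ‖g‖ * 1 := by
        rw [l2_opNorm_diagonal, l2_opNorm_conjTranspose]
        gcongr
        exacts [l2_opNorm_le_one_of_conjTranspose_mul_self_eq_one hU,
          l2_opNorm_le_one_of_conjTranspose_mul_self_eq_one hV]
    _ = ‖g‖ := by ring

omit [Fintype m] [Fintype n] in
lemma conjTranspose_mul_diagonal_mul_conjTranspose [DecidableEq r] (U : Matrix m r ℝ)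
    (V : Matrix n r ℝ) (g : r → ℝ) : (U * diagonal g * Vᴴ)ᴴ = V * diagonal g * Uᴴ := by
  simp [Matrix.mul_assoc]

lemma mul_diagonal_mul_conjTranspose_mul_mul_diagonal [DecidableEq r] {l p : Type*}
    {U : Matrix m r ℝ} (hU : Uᴴ * U = 1) (A : Matrix l r ℝ) (B : Matrix r p ℝ) (f g : r → ℝ) :
    A * diagonal f * Uᴴ * (U * diagonal g * B) = A * diagonal (f * g) * B := by
  rw [show diagonal (f * g) = diagonal f * diagonal g from (diagonal_mul_diagonal f g).symm]
  simp only [Matrix.mul_assoc]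
  rw [← Matrix.mul_assoc Uᴴ, hU, Matrix.one_mul]

lemma trace_mul_diagonal_mul_conjTranspose [DecidableEq r] {V : Matrix n r ℝ}
    (hV : Vᴴ * V = 1) (g : r → ℝ) : trace (V * diagonal g * Vᴴ) = ∑ i, g i := by
  rw [trace_mul_cycle, hV, Matrix.one_mul, trace_diagonal]

lemma trace_conjTranspose_mul_diagonal_mul_conjTranspose [DecidableEq r] {U : Matrix m r ℝ}
    {V : Matrix n r ℝ} (hU : Uᴴ * U = 1) (hV : Vᴴ * V = 1) (p q : r → ℝ) :
    trace ((U * diagonal p * Vᴴ)ᴴ * (U * diagonal q * Vᴴ)) = ∑ i, p i * q i := by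
  rw [conjTranspose_mul_diagonal_mul_conjTranspose,
    mul_diagonal_mul_conjTranspose_mul_mul_diagonal hU, trace_mul_diagonal_mul_conjTranspose hV]
  rfl

lemma trace_conjTranspose_mul_comm (A B : Matrix m n ℝ) : trace (Aᴴ * B) = trace (Bᴴ * A) := by
  simpa using (trace_conjTranspose (Aᴴ * B)).symm

lemma trace_conjTranspose_mul_self_sub (A B : Matrix m n ℝ) :
    trace ((A - B)ᴴ * (A - B)) = trace (Aᴴ * A) - 2 * trace (Bᴴ * A) + trace (Bᴴ * B) := by
  simp only [conjTranspose_sub, Matrix.sub_mul, Matrix.mul_sub, trace_sub]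
  rw [trace_conjTranspose_mul_comm A B]
  ring

lemma add_half_trace_sub_le_of_subgradient {N : Matrix m n ℝ → ℝ} {Y P : Matrix m n ℝ} {τ : ℝ}
    (hdual : ∀ X, trace ((Y - P)ᴴ * X) ≤ τ * N X) (hsub : τ * N P ≤ trace ((Y - P)ᴴ * P))
    (X : Matrix m n ℝ) :
    (1/2) * trace ((P - Y)ᴴ * (P - Y)) + τ * N P + (1/2) * trace ((X - P)ᴴ * (X - P)) ≤
      (1/2) * trace ((X - Y)ᴴ * (X - Y)) + τ * N X := by
  have hexpand := trace_conjTranspose_mul_self_sub (X - P) (Y - P)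
  rw [sub_sub_sub_cancel_right, Matrix.mul_sub (Y - P)ᴴ, trace_sub] at hexpand
  have hsymm : trace ((P - Y)ᴴ * (P - Y)) = trace ((Y - P)ᴴ * (Y - P)) := by
    rw [← neg_sub Y P, conjTranspose_neg, Matrix.neg_mul, Matrix.mul_neg, neg_neg]
  linarith [hdual X]
end

lemma Matrix.IsHermitian.eq_eigenvectorUnitary_mul_diagonal_mul_conjTranspose {n : Type*}
    [Fintype n] [DecidableEq n] {A : Matrix n n ℝ} (hA : A.IsHermitian) :
    A = (hA.eigenvectorUnitary : Matrix n n ℝ) * diagonal hA.eigenvalues *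
      (hA.eigenvectorUnitary : Matrix n n ℝ)ᴴ := by
  conv_lhs => rw [hA.spectral_theorem]
  simp [Unitary.conjStarAlgAut_apply, star_eq_conjTranspose]

section NuclearNorm
variable {m n : ℕ}

lemma nuclearNorm_nonneg (X : Matrix (Fin m) (Fin n) ℝ) : 0 ≤ nuclearNorm X :=
  Finset.sum_nonneg fun _ _ => Real.sqrt_nonneg _

lemma exists_l2_opNorm_le_one_and_trace_eq_nuclearNorm (X : Matrix (Fin m) (Fin n) ℝ) :
    ∃ W : Matrix (Fin m) (Fin n) ℝ, ‖W‖ ≤ 1 ∧ trace (Wᴴ * X) = nuclearNorm X := by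
  set hA := isHermitian_conjTranspose_mul_self X
  set Q : Matrix (Fin n) (Fin n) ℝ := ↑hA.eigenvectorUnitary
  set μ := hA.eigenvalues
  have hQ : Qᴴ * Q = 1 := Unitary.coe_star_mul_self hA.eigenvectorUnitary
  have hX : Xᴴ * X = Q * diagonal μ * Qᴴ :=
    hA.eq_eigenvectorUnitary_mul_diagonal_mul_conjTranspose
  -- `W = X |X|⁺` is the partial isometry of the polar decomposition of `X`; on `ker X` the
  -- junk value `0⁻¹ = 0` makes `e` vanish, as the pseudo-inverse should.
  set e : Fin n → ℝ := fun j => (√(μ j))⁻¹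
  have heμ : e * μ = fun j => √(μ j) := funext fun j => by simp [e, inv_mul_eq_div, Real.div_sqrt]
  set W := X * (Q * diagonal e * Qᴴ)
  have hWX : Wᴴ * X = Q * diagonal (e * μ) * Qᴴ := by
    rw [conjTranspose_mul, conjTranspose_mul_diagonal_mul_conjTranspose, Matrix.mul_assoc, hX,
      mul_diagonal_mul_conjTranspose_mul_mul_diagonal hQ]
  refine ⟨W, ?_, ?_⟩
  · have hWW : Wᴴ * W = Q * diagonal (e * μ * e) * Qᴴ := by
      rw [← Matrix.mul_assoc, hWX, mul_diagonal_mul_conjTranspose_mul_mul_diagonal hQ]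
    have hsq : ‖W‖ * ‖W‖ ≤ 1 := by
      rw [← l2_opNorm_conjTranspose_mul_self, hWW]
      refine (l2_opNorm_mul_diagonal_mul_conjTranspose_le hQ hQ _).trans <|
        (pi_norm_le_iff_of_nonneg zero_le_one).2 fun j => ?_
      rw [heμ, Pi.mul_apply, Real.norm_of_nonneg (by positivity)]
      exact mul_inv_le_one
    nlinarith [norm_nonneg W]
  · rw [hWX, trace_mul_diagonal_mul_conjTranspose hQ, heμ]
    rfl

lemma trace_conjTranspose_mul_le_l2_opNorm_mul_nuclearNorm (G X : Matrix (Fin m) (Fin n) ℝ) :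
    trace (Gᴴ * X) ≤ ‖G‖ * nuclearNorm X := by
  set hA := isHermitian_conjTranspose_mul_self X
  set Q : Matrix (Fin n) (Fin n) ℝ := ↑hA.eigenvectorUnitary
  set μ := hA.eigenvalues
  have hQ : Qᴴ * Q = 1 := Unitary.coe_star_mul_self hA.eigenvectorUnitary
  have hQ' : Q * Qᴴ = 1 := Unitary.coe_mul_star_self hA.eigenvectorUnitary
  have hXQ : (X * Q)ᴴ * (X * Q) = diagonal μ := by
    rw [conjTranspose_mul, Matrix.mul_assoc, ← Matrix.mul_assoc Xᴴ,
      hA.eq_eigenvectorUnitary_mul_diagonal_mul_conjTranspose]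
    simp only [Matrix.mul_assoc]
    rw [hQ, Matrix.mul_one, ← Matrix.mul_assoc, hQ, Matrix.one_mul]
  have hGQ : ‖G * Q‖ ≤ ‖G‖ :=
    (l2_opNorm_mul G Q).trans <| mul_le_of_le_one_right (norm_nonneg G)
      (l2_opNorm_le_one_of_conjTranspose_mul_self_eq_one hQ)
  calc trace (Gᴴ * X) = trace ((G * Q)ᴴ * (X * Q)) := by
        rw [conjTranspose_mul, Matrix.mul_assoc, trace_mul_comm Qᴴ, Matrix.mul_assoc,
          Matrix.mul_assoc, hQ', Matrix.mul_one]
    _ ≤ ∑ j, ‖G * Q‖ * √(μ j) := Finset.sum_le_sum fun j _ => by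
        have h := conjTranspose_mul_diag_le_l2_opNorm_mul_sqrt (G * Q) (X * Q) j
        rwa [hXQ, diagonal_apply_eq] at h
    _ ≤ ∑ j, ‖G‖ * √(μ j) := by gcongr
    _ = ‖G‖ * nuclearNorm X := Finset.mul_sum .. |>.symm

lemma nuclearNorm_mul_diagonal_mul_conjTranspose_le {r : Type*} [Fintype r] [DecidableEq r]
    {U : Matrix (Fin m) r ℝ} {V : Matrix (Fin n) r ℝ} (hU : Uᴴ * U = 1) (hV : Vᴴ * V = 1)
    {d : r → ℝ} (hd : ∀ i, 0 ≤ d i) : nuclearNorm (U * diagonal d * Vᴴ) ≤ ∑ i, d i := by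
  obtain ⟨W, hW, hWX⟩ := exists_l2_opNorm_le_one_and_trace_eq_nuclearNorm (U * diagonal d * Vᴴ)
  have hWV : ‖W * V‖ ≤ 1 :=
    (l2_opNorm_mul W V).trans <| mul_le_one₀ hW (norm_nonneg V)
      (l2_opNorm_le_one_of_conjTranspose_mul_self_eq_one hV)
  rw [← hWX, ← Matrix.mul_assoc, trace_mul_comm, ← Matrix.mul_assoc, ← conjTranspose_mul,
    ← Matrix.mul_assoc]
  simp only [trace, diag, mul_diagonal]
  refine Finset.sum_le_sum fun i _ => mul_le_of_le_one_left (hd i) ?_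
  have h := conjTranspose_mul_diag_le_l2_opNorm_mul_sqrt (W * V) U i
  rw [hU, one_apply_eq, Real.sqrt_one, mul_one] at h
  exact h.trans hWV
end NuclearNorm

theorem stmt11 {m n r : ℕ} (Y : Matrix (Fin m) (Fin n) ℝ)
    (U : Matrix (Fin m) (Fin r) ℝ) (V : Matrix (Fin n) (Fin r) ℝ)
    (σ : Fin r → ℝ) (hσ : ∀ i, 0 ≤ σ i)
    (hU : Uᴴ * U = 1) (hV : Vᴴ * V = 1)
    (hY : Y = U * Matrix.diagonal σ * Vᴴ)
    (τ : ℝ) (hτ : 0 < τ)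
    (P : Matrix (Fin m) (Fin n) ℝ)
    (hP : P = U * Matrix.diagonal (fun i => max (σ i - τ) 0) * Vᴴ) :
    (∀ X : Matrix (Fin m) (Fin n) ℝ,
      (1/2) * Matrix.trace ((P - Y)ᴴ * (P - Y)) + τ * nuclearNorm P ≤
      (1/2) * Matrix.trace ((X - Y)ᴴ * (X - Y)) + τ * nuclearNorm X) ∧
    (∀ X : Matrix (Fin m) (Fin n) ℝ, X ≠ P →
      (1/2) * Matrix.trace ((P - Y)ᴴ * (P - Y)) + τ * nuclearNorm P <
      (1/2) * Matrix.trace ((X - Y)ᴴ * (X - Y)) + τ * nuclearNorm X) := by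
  set d : Fin r → ℝ := fun i => max (σ i - τ) 0
  set g : Fin r → ℝ := fun i => min (σ i) τ
  have hYP : Y - P = U * diagonal g * Vᴴ := by
    rw [hY, hP, ← Matrix.sub_mul, ← Matrix.mul_sub, diagonal_sub]
    congr with i
    grind
  have hg : ‖g‖ ≤ τ := (pi_norm_le_iff_of_nonneg hτ.le).2 fun i => by
    rw [Real.norm_of_nonneg (le_min (hσ i) hτ.le)]
    exact min_le_right _ _
  have hdual : ∀ X, trace ((Y - P)ᴴ * X) ≤ τ * nuclearNorm X := fun X => by
    rw [hYP]
    exact (trace_conjTranspose_mul_le_l2_opNorm_mul_nuclearNorm _ X).trans <|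
      mul_le_mul_of_nonneg_right ((l2_opNorm_mul_diagonal_mul_conjTranspose_le hU hV g).trans hg)
        (nuclearNorm_nonneg X)
  have hsubgradient : τ * nuclearNorm P ≤ trace ((Y - P)ᴴ * P) :=
    calc τ * nuclearNorm P ≤ τ * ∑ i, d i := by
          rw [hP]
          gcongr
          exact nuclearNorm_mul_diagonal_mul_conjTranspose_le hU hV fun i => le_max_right _ _
      _ = ∑ i, g i * d i := by
          -- `min σᵢ τ = τ` wherever `(σᵢ - τ)⁺ ≠ 0`
          rw [Finset.mul_sum]
          congr with i
          grind
      _ = trace ((Y - P)ᴴ * P) := by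
          rw [hYP, hP, trace_conjTranspose_mul_diagonal_mul_conjTranspose hU hV]
  have hopt := add_half_trace_sub_le_of_subgradient hdual hsubgradient
  refine ⟨fun X => ?_, fun X hX => ?_⟩
  · linarith [hopt X, (posSemidef_conjTranspose_mul_self (X - P)).trace_nonneg]
  · have hpos : 0 < trace ((X - P)ᴴ * (X - P)) :=
      (posSemidef_conjTranspose_mul_self (X - P)).trace_nonneg.lt_of_ne' <|
        trace_conjTranspose_mul_self_eq_zero_iff.not.2 (sub_ne_zero.2 hX)
    linarith [hopt X]
end
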